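/- Let L ≥ 2 and let c ≥ 1 be a real number (c = min(b_{L+1}, c_{L+1}) with b_{L+1} ≥ 1). Consider real numbers d, d_1, …, d_{L+1} satisfying: (norm constraints) d_1 ≥ 1/2 − c, d_l ≥ 1 − c for 2 ≤ l ≤ L, d_{L+1} ≥ 1/2, with equality in at least one; (effective perturbation in every layer) c + d + d_1 = 0, c + d + d_l − 1 = 0 for 2 ≤ l ≤ L, and d + d_{L+1} = 1. Then necessarily d = −1/2, d_1 = 1/2 − c, d_l = 3/2 − c for 2 ≤ l ≤ L, and d_{L+1} = 3/2. Conversely, these values satisfy all the listed constraints. -/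

import Mathlib

/-!
The effective-perturbation equations express every `d_l` as an affine function of `d`, and each
norm constraint then reads `d ≤ -1/2`. Hence tightness of any one of them forces `d = -1/2`, which
determines all the other exponents.
-/

theorem perturbation_exponent_eq_neg_half {L : ℕ} {c d : ℝ} {dl : ℕ → ℝ}
    (h1 : 1/2 - c ≤ dl 1)
    (tight : dl 1 = 1/2 - c ∨ (∃ l : ℕ, 2 ≤ l ∧ l ≤ L ∧ dl l = 1 - c) ∨ dl (L+1) = 1/2)
    (e1 : c + d + dl 1 = 0) (e2 : ∀ l : ℕ, 2 ≤ l → l ≤ L → c + d + dl l - 1 = 0)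
    (e3 : d + dl (L+1) = 1) :
    d = -(1/2) := by
  have hle : d ≤ -(1/2) := by linarith
  rcases tight with h | ⟨l, hl2, hlL, h⟩ | h
  · linarith
  · linarith [e2 l hl2 hlL]
  · linarith

noncomputable def mppPerturbationExponents (L : ℕ) (c : ℝ) (l : ℕ) : ℝ :=
  if l = 1 then 1/2 - c else if l = L + 1 then 3/2 else 3/2 - c

theorem mppPerturbationExponents_one (L : ℕ) (c : ℝ) : mppPerturbationExponents L c 1 = 1/2 - c :=
  if_pos rfl

theorem mppPerturbationExponents_of_two_le_of_le {L : ℕ} (c : ℝ) (l : ℕ) (hl2 : 2 ≤ l)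
    (hlL : l ≤ L) :
    mppPerturbationExponents L c l = 3/2 - c := by
  rw [mppPerturbationExponents, if_neg (by omega), if_neg (by omega)]

theorem mppPerturbationExponents_succ {L : ℕ} (c : ℝ) (hL : L ≠ 0) :
    mppPerturbationExponents L c (L + 1) = 3/2 := by
  rw [mppPerturbationExponents, if_neg (by omega), if_pos rfl]

theorem stmt7_general (L : ℕ) (hL : 2 ≤ L) (c : ℝ) :
    (∀ (d : ℝ) (dl : ℕ → ℝ),
      (1/2 - c ≤ dl 1) →
      (∀ l : ℕ, 2 ≤ l → l ≤ L → 1 - c ≤ dl l) →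
      (1/2 ≤ dl (L+1)) →
      (dl 1 = 1/2 - c ∨ (∃ l : ℕ, 2 ≤ l ∧ l ≤ L ∧ dl l = 1 - c) ∨ dl (L+1) = 1/2) →
      (c + d + dl 1 = 0) →
      (∀ l : ℕ, 2 ≤ l → l ≤ L → c + d + dl l - 1 = 0) →
      (d + dl (L+1) = 1) →
      d = -(1/2) ∧ dl 1 = 1/2 - c ∧ (∀ l : ℕ, 2 ≤ l → l ≤ L → dl l = 3/2 - c) ∧
        dl (L+1) = 3/2) ∧
    (∃ (d : ℝ) (dl : ℕ → ℝ),
      d = -(1/2) ∧ dl 1 = 1/2 - c ∧ (∀ l : ℕ, 2 ≤ l → l ≤ L → dl l = 3/2 - c) ∧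
      dl (L+1) = 3/2 ∧
      (1/2 - c ≤ dl 1) ∧
      (∀ l : ℕ, 2 ≤ l → l ≤ L → 1 - c ≤ dl l) ∧
      (1/2 ≤ dl (L+1)) ∧
      (dl 1 = 1/2 - c ∨ (∃ l : ℕ, 2 ≤ l ∧ l ≤ L ∧ dl l = 1 - c) ∨ dl (L+1) = 1/2) ∧
      (c + d + dl 1 = 0) ∧
      (∀ l : ℕ, 2 ≤ l → l ≤ L → c + d + dl l - 1 = 0) ∧
      (d + dl (L+1) = 1)) := by
  constructor
  · intro d dl h1 _ _ tight e1 e2 e3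
    have hd := perturbation_exponent_eq_neg_half h1 tight e1 e2 e3
    exact ⟨hd, by linarith, fun l hl2 hlL => by linarith [e2 l hl2 hlL], by linarith⟩
  · have h1 := mppPerturbationExponents_one L c
    have hmid := mppPerturbationExponents_of_two_le_of_le (L := L) c
    have hlast := mppPerturbationExponents_succ c (by omega : L ≠ 0)
    refine ⟨-(1/2), mppPerturbationExponents L c, rfl, h1, hmid, hlast, h1.ge,
      fun l hl2 hlL => ?_, by linarith, Or.inl h1, by linarith, fun l hl2 hlL => ?_, by linarith⟩
    · linarith [hmid l hl2 hlL]
    · linarith [hmid l hl2 hlL]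

theorem stmt7 (L : ℕ) (hL : 2 ≤ L) (c : ℝ) (hc : 1 ≤ c) :
    (∀ (d : ℝ) (dl : ℕ → ℝ),
      (1/2 - c ≤ dl 1) →
      (∀ l : ℕ, 2 ≤ l → l ≤ L → 1 - c ≤ dl l) →
      (1/2 ≤ dl (L+1)) →
      (dl 1 = 1/2 - c ∨ (∃ l : ℕ, 2 ≤ l ∧ l ≤ L ∧ dl l = 1 - c) ∨ dl (L+1) = 1/2) →
      (c + d + dl 1 = 0) →
      (∀ l : ℕ, 2 ≤ l → l ≤ L → c + d + dl l - 1 = 0) →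
      (d + dl (L+1) = 1) →
      d = -(1/2) ∧ dl 1 = 1/2 - c ∧ (∀ l : ℕ, 2 ≤ l → l ≤ L → dl l = 3/2 - c) ∧
        dl (L+1) = 3/2) ∧
    (∃ (d : ℝ) (dl : ℕ → ℝ),
      d = -(1/2) ∧ dl 1 = 1/2 - c ∧ (∀ l : ℕ, 2 ≤ l → l ≤ L → dl l = 3/2 - c) ∧
      dl (L+1) = 3/2 ∧
      (1/2 - c ≤ dl 1) ∧
      (∀ l : ℕ, 2 ≤ l → l ≤ L → 1 - c ≤ dl l) ∧
      (1/2 ≤ dl (L+1)) ∧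
      (dl 1 = 1/2 - c ∨ (∃ l : ℕ, 2 ≤ l ∧ l ≤ L ∧ dl l = 1 - c) ∨ dl (L+1) = 1/2) ∧
      (c + d + dl 1 = 0) ∧
      (∀ l : ℕ, 2 ≤ l → l ≤ L → c + d + dl l - 1 = 0) ∧
      (d + dl (L+1) = 1)) :=
  stmt7_general L hL c
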